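/- If there exists a surjective ALC morphism (epimorphism) μ : Δ^I → Δ^{I'}, then for all concept descriptions C and D, I satisfies C ⊑ D if and only if I' satisfies C ⊑ D. -/
import Mathlib


/-- ALC concept descriptions over concept names `NC` and role names `NR`. -/
inductive ALCConcept (NC NR : Type) : Type
  | bot : ALCConcept NC NR
  | top : ALCConcept NC NR
  | atom : NC → ALCConcept NC NR
  | inf : ALCConcept NC NR → ALCConcept NC NR → ALCConcept NC NR
  | sup : ALCConcept NC NR → ALCConcept NC NR → ALCConcept NC NR
  | compl : ALCConcept NC NR → ALCConcept NC NR
  | all : NR → ALCConcept NC NR → ALCConcept NC NR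
  | ex : NR → ALCConcept NC NR → ALCConcept NC NR

/-- A Σ-model: nonempty carrier, interpretation of concept and role names. -/
structure ALCModel (NC NR : Type) : Type 1 where
  Δ : Type
  nonempty : Nonempty Δ
  ic : NC → Set Δ
  ir : NR → Set (Δ × Δ)

/-- Standard ALC evaluation of a concept in a model. -/
def ALCModel.eval {NC NR : Type} (I : ALCModel NC NR) : ALCConcept NC NR → Set I.Δ
  | .bot => ∅
  | .top => Set.univ
  | .atom c => I.ic c
  | .inf C D => I.eval C ∩ I.eval D
  | .sup C D => I.eval C ∪ I.eval D
  | .compl C => (I.eval C)ᶜ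
  | .all r C => {x | ∀ y, (x, y) ∈ I.ir r → y ∈ I.eval C}
  | .ex r C => {x | ∃ y, (x, y) ∈ I.ir r ∧ y ∈ I.eval C}

/-- Satisfaction of a GCI `C ⊑ D`. -/
def ALCModel.Sat {NC NR : Type} (I : ALCModel NC NR) (C D : ALCConcept NC NR) : Prop :=
  I.eval C ⊆ I.eval D

/-- ALC morphism (functional bisimulation) between models. -/
def IsMorphism {NC NR : Type} (I I' : ALCModel NC NR) (μ : I.Δ → I'.Δ) : Prop :=
  (∀ c a, a ∈ I.ic c ↔ μ a ∈ I'.ic c) ∧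
  (∀ r a b, (a, b) ∈ I.ir r → (μ a, μ b) ∈ I'.ir r) ∧
  (∀ r a a', (μ a, a') ∈ I'.ir r → ∃ b, (a, b) ∈ I.ir r ∧ μ b = a')

theorem morphism_eval {NC NR : Type} {I I' : ALCModel NC NR} {μ : I.Δ → I'.Δ}
    (hm : IsMorphism I I' μ) : ∀ (C : ALCConcept NC NR) (a : I.Δ),
    a ∈ I.eval C ↔ μ a ∈ I'.eval C := by
  obtain ⟨hc, hf, hb⟩ := hm
  intro C
  induction C with
  | bot => intro a; simp [ALCModel.eval]
  | top => intro a; simp [ALCModel.eval]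
  | atom c => intro a; exact hc c a
  | inf C D ih1 ih2 => intro a; simp [ALCModel.eval, ih1 a, ih2 a]
  | sup C D ih1 ih2 => intro a; simp [ALCModel.eval, ih1 a, ih2 a]
  | compl C ih => intro a; simp [ALCModel.eval, ih a]
  | all r C ih =>
    intro a
    constructor
    · intro h y hy
      obtain ⟨b, hab, rfl⟩ := hb r a y hy
      exact (ih b).mp (h b hab)
    · intro h y hy
      exact (ih y).mpr (h (μ y) (hf r a y hy))
  | ex r C ih =>
    intro a
    constructor
    · rintro ⟨y, hy, hyC⟩
      exact ⟨μ y, hf r a y hy, (ih y).mp hyC⟩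
    · rintro ⟨y, hy, hyC⟩
      obtain ⟨b, hab, rfl⟩ := hb r a y hy
      exact ⟨b, hab, (ih b).mpr hyC⟩

theorem epimorphism_preserves_reflects_gci {NC NR : Type} (I I' : ALCModel NC NR)
    (h : ∃ μ : I.Δ → I'.Δ, IsMorphism I I' μ ∧ Function.Surjective μ) :
    ∀ C D : ALCConcept NC NR, I.Sat C D ↔ I'.Sat C D := by
  obtain ⟨μ, hm, hs⟩ := h
  intro C D
  constructor
  · intro hsat x hx
    obtain ⟨a, rfl⟩ := hs x
    exact (morphism_eval hm D a).mp (hsat ((morphism_eval hm C a).mpr hx))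
  · intro hsat a ha
    exact (morphism_eval hm D a).mpr (hsat ((morphism_eval hm C a).mp ha))
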